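/- Let a > 0, T > 0, σ̂ ≥ 0, τ ≥ 0, δ ∈ [0,1], η ≥ 0 with τ ≤ ηT. Then (√(2σ̂²a/T) + 3a/T) / (√(2σ̂²a/(T + δτ)) + 3a/(T + δτ)) ≤ 1 + δη. -/

import Mathlib

/-
Both terms of the width decrease with the sample size `T`: `b / T` scales like `1 / T` and
`√(c / T)` like its square root. Since `T + δτ ≤ (1 + δη) T`, replacing `T + δτ`
by `T` inflates `b / ·` by at most `1 + δη` and `√(c / ·)` by at most `√(1 + δη) ≤ 1 + δη`.
-/

lemma Real.sqrt_mul_le_mul_sqrt {k x : ℝ} (hk : 1 ≤ k) (hx : 0 ≤ x) : √(k * x) ≤ k * √x := by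
  calc √(k * x) ≤ √(k ^ 2 * x) := by gcongr; nlinarith
    _ = k * √x := by rw [Real.sqrt_mul (by positivity), Real.sqrt_sq (by positivity)]

lemma div_le_mul_div_of_le_mul {b T S k : ℝ} (hb : 0 ≤ b) (hT : 0 < T) (hS : 0 < S)
    (hST : S ≤ k * T) : b / T ≤ k * (b / S) := by
  rw [mul_div_assoc', div_le_div_iff₀ hT hS]
  nlinarith

lemma sqrt_add_div_le_mul {c b T S k : ℝ} (hc : 0 ≤ c) (hb : 0 ≤ b) (hT : 0 < T) (hS : 0 < S)
    (hk : 1 ≤ k) (hST : S ≤ k * T) :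
    √(c / T) + b / T ≤ k * (√(c / S) + b / S) := by
  have hsqrt : √(c / T) ≤ k * √(c / S) :=
    calc √(c / T) ≤ √(k * (c / S)) := Real.sqrt_le_sqrt (div_le_mul_div_of_le_mul hc hT hS hST)
      _ ≤ k * √(c / S) := Real.sqrt_mul_le_mul_sqrt hk (div_nonneg hc hS.le)
  linarith [div_le_mul_div_of_le_mul hb hT hS hST]

theorem stmt_8_general (a T σ τ δ η : ℝ) (ha : 0 < a) (hT : 0 < T)
    (hτ : 0 ≤ τ) (hδ0 : 0 ≤ δ) (hη : 0 ≤ η) (hτη : τ ≤ η * T) :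
    (Real.sqrt (2 * σ ^ 2 * a / T) + 3 * a / T)
      / (Real.sqrt (2 * σ ^ 2 * a / (T + δ * τ)) + 3 * a / (T + δ * τ))
      ≤ 1 + δ * η := by
  have hS : 0 < T + δ * τ := by positivity
  have hk : 1 ≤ 1 + δ * η := le_add_of_nonneg_right (by positivity)
  have hST : T + δ * τ ≤ (1 + δ * η) * T := by nlinarith [mul_le_mul_of_nonneg_left hτη hδ0]
  refine div_le_of_le_mul₀ (by positivity) (by positivity) ?_
  exact sqrt_add_div_le_mul (by positivity) (by positivity) hT hS hk hST

theorem stmt_8 (a T σ τ δ η : ℝ) (ha : 0 < a) (hT : 0 < T) (hσ : 0 ≤ σ)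
    (hτ : 0 ≤ τ) (hδ0 : 0 ≤ δ) (hδ1 : δ ≤ 1) (hη : 0 ≤ η) (hτη : τ ≤ η * T) :
    (Real.sqrt (2 * σ ^ 2 * a / T) + 3 * a / T)
      / (Real.sqrt (2 * σ ^ 2 * a / (T + δ * τ)) + 3 * a / (T + δ * τ))
      ≤ 1 + δ * η :=
  stmt_8_general a T σ τ δ η ha hT hτ hδ0 hη hτη
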